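/- For all n ≥ 0 and parameters a, b (with denominators nonzero), the closed forms c_{2n} = (a)_n(a−b+1/2)_n/(n!(b+1/2)_n) and c_{2n+1} = (−2a/(2b+1))·(a+1)_n(a−b+1/2)_n/(n!(b+3/2)_n) satisfy the three-term recurrence (m)(m+2b)c_m = (m+2(a−1))(m+2(a−b−1))c_{m−2} − 2(m+a−1)c_{m−1} for every m ≥ 2. -/

import Mathlib

open scoped Nat

/-- Pochhammer symbol (rising factorial). -/
noncomputable def poch (a : ℝ) (n : ℕ) : ℝ := (ascPochhammer ℝ n).eval a

/-- Gauss hypergeometric series ₂F₁(a,b;c;z). -/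
noncomputable def F (a b c z : ℝ) : ℝ :=
  ∑' n : ℕ, poch a n * poch b n / (poch c n * (n ! : ℝ)) * z ^ n

/-! Both closed forms obey the first-order relations
`(2b+1+2n) c₂ₙ₊₁ = -(2a+2n) c₂ₙ` and `(2n+2) c₂ₙ₊₂ = -(2a-2b+2n+1) c₂ₙ₊₁`,
which come from `(x)ₙ₊₁ = (x)ₙ (x+n) = x (x+1)ₙ`. Eliminating `c_{m-1}` and `c_m` through
them turns the three-term recurrence at `m` into a polynomial identity in `a, b, m`. -/

lemma poch_succ (x : ℝ) (n : ℕ) : poch x (n + 1) = poch x n * (x + n) := by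
  simp [poch, ascPochhammer_succ_eval]

lemma poch_succ_left (x : ℝ) (n : ℕ) : poch x (n + 1) = x * poch (x + 1) n := by
  simp [poch, ascPochhammer_succ_left, Polynomial.eval_comp]

lemma poch_ne_zero {x : ℝ} (hx : ∀ k : ℕ, x + k ≠ 0) (n : ℕ) : poch x n ≠ 0 := by
  induction n with
  | zero => simp [poch]
  | succ n ih => rw [poch_succ]; exact mul_ne_zero ih (hx n)

lemma three_term_recurrence_of_steps {a b : ℝ} {c : ℕ → ℝ}
    (hb : ∀ n : ℕ, 2 * b + 1 + 2 * n ≠ 0)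
    (hodd : ∀ n : ℕ, (2 * b + 1 + 2 * n) * c (2 * n + 1) = -(2 * a + 2 * n) * c (2 * n))
    (heven : ∀ n : ℕ, (2 * n + 2) * c (2 * n + 2) = -(2 * a - 2 * b + 2 * n + 1) * c (2 * n + 1))
    (m : ℕ) (hm : 2 ≤ m) :
    (m : ℝ) * ((m : ℝ) + 2 * b) * c m =
      ((m : ℝ) + 2 * (a - 1)) * ((m : ℝ) + 2 * (a - b - 1)) * c (m - 2)
        - 2 * ((m : ℝ) + a - 1) * c (m - 1) := by
  obtain ⟨k, rfl⟩ : ∃ k, m = k + 2 := ⟨m - 2, by omega⟩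
  rcases Nat.even_or_odd' k with ⟨n, rfl | rfl⟩
  · rw [show 2 * n + 2 - 2 = 2 * n by omega, show 2 * n + 2 - 1 = 2 * n + 1 by omega]
    refine mul_left_cancel₀ (hb n) ?_
    push_cast
    linear_combination (2 * b + 1 + 2 * n) * (2 * n + 2 + 2 * b) * heven n
      + (2 * (2 * n + 1 + a) - (2 * n + 2 + 2 * b) * (2 * a - 2 * b + 2 * n + 1)) * hodd n
  · have hodd' := hodd (n + 1)
    rw [show 2 * (n + 1) + 1 = 2 * n + 1 + 2 by omega, show 2 * (n + 1) = 2 * n + 2 by omega]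
      at hodd'
    rw [show 2 * n + 1 + 2 - 2 = 2 * n + 1 by omega, show 2 * n + 1 + 2 - 1 = 2 * n + 2 by omega]
    refine mul_left_cancel₀ (show (2 * n + 2 : ℝ) ≠ 0 by positivity) ?_
    push_cast at hodd' ⊢
    linear_combination (2 * n + 2) * (2 * n + 3) * hodd'
      + (2 * (2 * n + 2 + a) - (2 * n + 3) * (2 * a + 2 * n + 2)) * heven n

lemma odd_closed_form_eq_neg_poch_succ (a b : ℝ) (hb : 2 * b + 1 ≠ 0) (n : ℕ) :
    (-2 * a / (2 * b + 1)) *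
      (poch (a + 1) n * poch (a - b + 1/2) n / ((n ! : ℝ) * poch (b + 3/2) n)) =
    -(poch a (n + 1) * poch (a - b + 1/2) n / ((n ! : ℝ) * poch (b + 1/2) (n + 1))) := by
  rw [poch_succ_left a, poch_succ_left (b + 1/2), show b + 1/2 + 1 = b + 3/2 by ring]
  field_simp

section ClosedForm

variable {a b : ℝ} {c : ℕ → ℝ}

lemma closed_form_odd_step (hb : ∀ k : ℕ, 2 * b + 1 + (k : ℝ) ≠ 0)
    (hceven : ∀ n : ℕ, c (2 * n) = poch a n * poch (a - b + 1/2) n /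
      ((n ! : ℝ) * poch (b + 1/2) n))
    (hcodd : ∀ n : ℕ, c (2 * n + 1) = (-2 * a / (2 * b + 1)) *
      (poch (a + 1) n * poch (a - b + 1/2) n / ((n ! : ℝ) * poch (b + 3/2) n)))
    (n : ℕ) :
    (2 * b + 1 + 2 * n) * c (2 * n + 1) = -(2 * a + 2 * n) * c (2 * n) := by
  have hQ := poch_ne_zero (x := b + 1/2) (fun k h => hb (2 * k) (by push_cast; linarith)) n
  have hn : 2 * b + 1 + 2 * (n : ℝ) ≠ 0 := by exact_mod_cast hb (2 * n)
  rw [hcodd, hceven, odd_closed_form_eq_neg_poch_succ a b (by simpa using hb 0), poch_succ,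
    poch_succ]
  field_simp

lemma closed_form_even_step (hb : ∀ k : ℕ, 2 * b + 1 + (k : ℝ) ≠ 0)
    (hceven : ∀ n : ℕ, c (2 * n) = poch a n * poch (a - b + 1/2) n /
      ((n ! : ℝ) * poch (b + 1/2) n))
    (hcodd : ∀ n : ℕ, c (2 * n + 1) = (-2 * a / (2 * b + 1)) *
      (poch (a + 1) n * poch (a - b + 1/2) n / ((n ! : ℝ) * poch (b + 3/2) n)))
    (n : ℕ) :
    (2 * n + 2) * c (2 * n + 2) = -(2 * a - 2 * b + 2 * n + 1) * c (2 * n + 1) := by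
  have hQ := poch_ne_zero (x := b + 1/2) (fun k h => hb (2 * k) (by push_cast; linarith)) (n + 1)
  rw [show 2 * n + 2 = 2 * (n + 1) by ring, hcodd, hceven,
    odd_closed_form_eq_neg_poch_succ a b (by simpa using hb 0), poch_succ (a - b + 1/2),
    Nat.factorial_succ]
  push_cast
  field_simp
  ring

end ClosedForm

theorem closed_form_satisfies_recurrence_first_general (a b : ℝ)
    (hb : ∀ k : ℕ, 2 * b + 1 + (k : ℝ) ≠ 0)
    (c : ℕ → ℝ)
    (hceven : ∀ n : ℕ, c (2 * n) = poch a n * poch (a - b + 1/2) n /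
      ((n ! : ℝ) * poch (b + 1/2) n))
    (hcodd : ∀ n : ℕ, c (2 * n + 1) = (-2 * a / (2 * b + 1)) *
      (poch (a + 1) n * poch (a - b + 1/2) n / ((n ! : ℝ) * poch (b + 3/2) n))) :
    ∀ m : ℕ, 2 ≤ m →
      (m : ℝ) * ((m : ℝ) + 2 * b) * c m =
        ((m : ℝ) + 2 * (a - 1)) * ((m : ℝ) + 2 * (a - b - 1)) * c (m - 2)
          - 2 * ((m : ℝ) + a - 1) * c (m - 1) :=
  three_term_recurrence_of_steps (fun n => by exact_mod_cast hb (2 * n))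
    (closed_form_odd_step hb hceven hcodd) (closed_form_even_step hb hceven hcodd)

theorem closed_form_satisfies_recurrence_first (a b : ℝ)
    (hb : ∀ k : ℕ, 2 * b + 1 + (k : ℝ) ≠ 0)
    (hwell : ∀ m : ℕ, 1 ≤ m → (m : ℝ) * ((m : ℝ) + 2 * b) ≠ 0)
    (c : ℕ → ℝ)
    (hceven : ∀ n : ℕ, c (2 * n) = poch a n * poch (a - b + 1/2) n /
      ((n ! : ℝ) * poch (b + 1/2) n))
    (hcodd : ∀ n : ℕ, c (2 * n + 1) = (-2 * a / (2 * b + 1)) *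
      (poch (a + 1) n * poch (a - b + 1/2) n / ((n ! : ℝ) * poch (b + 3/2) n))) :
    ∀ m : ℕ, 2 ≤ m →
      (m : ℝ) * ((m : ℝ) + 2 * b) * c m =
        ((m : ℝ) + 2 * (a - 1)) * ((m : ℝ) + 2 * (a - b - 1)) * c (m - 2)
          - 2 * ((m : ℝ) + a - 1) * c (m - 1) :=
  closed_form_satisfies_recurrence_first_general a b hb c hceven hcodd
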